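/- arXiv:2507.18057 — 2 statements merged into one kernel-verified Lean document; each statement's English description precedes it below -/
import Mathlib

section
/- Let g(x) = (x^3)/3 + (x^2)/2 + x/6 (as a map on integers, where g(n) is the n-th square pyramidal number). For every integer B and every k ≥ 1, the congruence g(x) + B ≡ 0 (mod 2^k) has a solution x with x ≡ 6n (mod 2^{k}) for some n; in particular g(x) ≡ -B (mod 2^k) is solvable. -/
/-! Substituting `x = 6n` clears the denominator: `g (6n) = 72n³ + 18n² + n`. Shifting `n` by `2^k`
changes this cubic by `2^k` times an odd number, so a solution modulo `2^k` is lifted to one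
modulo `2^(k+1)` either as it is or after that shift (Hensel's lemma at the prime 2, the derivative
`216n² + 36n + 1` being odd). -/

theorem Int.exists_two_pow_dvd_add_of_odd_shift (f : ℤ → ℤ)
    (hf : ∀ (n : ℤ) (k : ℕ), ∃ c, f (n + 2 ^ k) - f n = 2 ^ k * (2 * c + 1)) (B : ℤ) :
    ∀ k : ℕ, ∃ n, (2 : ℤ) ^ k ∣ f n + B
  | 0 => ⟨0, by simp⟩
  | k + 1 => by
    obtain ⟨n, c, hn⟩ := Int.exists_two_pow_dvd_add_of_odd_shift f hf B k
    rcases Int.even_or_odd' c with ⟨d, rfl | rfl⟩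
    · exact ⟨n, d, by rw [hn]; ring⟩
    · obtain ⟨e, he⟩ := hf n k
      refine ⟨n + 2 ^ k, d + e + 1, ?_⟩
      linear_combination hn + he

theorem odd_shift_pyramidal_six_mul (n : ℤ) (k : ℕ) :
    ∃ c, (72 * (n + 2 ^ k) ^ 3 + 18 * (n + 2 ^ k) ^ 2 + (n + 2 ^ k))
      - (72 * n ^ 3 + 18 * n ^ 2 + n) = 2 ^ k * (2 * c + 1) :=
  ⟨108 * n ^ 2 + 108 * n * 2 ^ k + 36 * (2 ^ k) ^ 2 + 18 * n + 9 * 2 ^ k, by ring⟩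

theorem pyramidal_six_mul (n : ℤ) :
    (2 * (6 * n) ^ 3 + 3 * (6 * n) ^ 2 + 6 * n) / 6 = 72 * n ^ 3 + 18 * n ^ 2 + n := by
  rw [show 2 * (6 * n) ^ 3 + 3 * (6 * n) ^ 2 + 6 * n = 6 * (72 * n ^ 3 + 18 * n ^ 2 + n) by ring,
    Int.mul_ediv_cancel_left _ (by norm_num)]

theorem pyramidal_two_adic_solvable_general
    (g : ℤ → ℤ) (hg : ∀ x : ℤ, g x = (2 * x ^ 3 + 3 * x ^ 2 + x) / 6)
    (B : ℤ) (k : ℕ) :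
    ∃ x n : ℤ, x ≡ 6 * n [ZMOD (2 : ℤ) ^ k] ∧ g x + B ≡ 0 [ZMOD (2 : ℤ) ^ k] := by
  obtain ⟨n, hn⟩ := Int.exists_two_pow_dvd_add_of_odd_shift
    (fun n => 72 * n ^ 3 + 18 * n ^ 2 + n) odd_shift_pyramidal_six_mul B k
  refine ⟨6 * n, n, rfl, ?_⟩
  rw [hg, pyramidal_six_mul]
  exact Int.modEq_zero_iff_dvd.mpr hn

theorem pyramidal_two_adic_solvable
    (g : ℤ → ℤ) (hg : ∀ x : ℤ, g x = (2 * x ^ 3 + 3 * x ^ 2 + x) / 6)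
    (B : ℤ) (k : ℕ) (hk : 1 ≤ k) :
    ∃ x n : ℤ, x ≡ 6 * n [ZMOD (2 : ℤ) ^ k] ∧ g x + B ≡ 0 [ZMOD (2 : ℤ) ^ k] :=
  pyramidal_two_adic_solvable_general g hg B k
end

section
/- For any integer m and any prime p ≥ 11, let M_m(p) denote the number of tuples (n_1, ..., n_9) ∈ (ℤ/pℤ)^9 with g(n_1) + ... + g(n_9) ≡ m (mod p), where g(x) = (2x^3+3x^2+x)/6 computed in ℤ/pℤ (note p coprime to 6). Then M_m(p) ≥ p^8 (1 - 2/√p - 3/p). -/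
open Finset Complex Polynomial

namespace LocalCountAux

variable {p : ℕ} [Fact p.Prime]

noncomputable def ψ (p : ℕ) [NeZero p] : AddChar (ZMod p) ℂ := ZMod.stdAddChar

def g {p : ℕ} (x : ZMod p) : ZMod p := (6 : ZMod p)⁻¹ * (2 * x ^ 3 + 3 * x ^ 2 + x)

noncomputable def S (p : ℕ) [NeZero p] (t : ZMod p) : ℂ := ∑ x : ZMod p, ψ p (t * g x)

lemma norm_psi (x : ZMod p) : ‖ψ p x‖ = 1 := by
  rw [ψ, ZMod.stdAddChar_apply, Circle.norm_coe]

lemma psi_ne_zero (x : ZMod p) : ψ p x ≠ 0 := by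
  intro h
  have := norm_psi (p := p) x
  rw [h] at this
  simp at this

lemma conj_psi (x : ZMod p) : (starRingEnd ℂ) (ψ p x) = ψ p (-x) := by
  have h1 : ψ p (-x) * ψ p x = 1 := by
    rw [← AddChar.map_add_eq_mul, neg_add_cancel, AddChar.map_zero_eq_one]
  have h2 : (starRingEnd ℂ) (ψ p x) * ψ p x = 1 := by
    rw [mul_comm, Complex.mul_conj]
    have : Complex.normSq (ψ p x) = 1 := by
      rw [Complex.normSq_eq_norm_sq, norm_psi]
      norm_num
    rw [this]
    norm_num
  exact mul_right_cancel₀ (psi_ne_zero x) (h2.trans h1.symm)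

lemma sum_psi_mul (c : ZMod p) :
    ∑ t : ZMod p, ψ p (t * c) = if c = 0 then (p : ℂ) else 0 := by
  split_ifs with h
  · simp only [h, mul_zero, AddChar.map_zero_eq_one, Finset.sum_const, Finset.card_univ,
      ZMod.card, nsmul_eq_mul, mul_one]
  · have := AddChar.sum_eq_zero_of_ne_one (ZMod.isPrimitive_stdAddChar p h)
    simpa only [AddChar.mulShift_apply, mul_comm, ψ] using this

lemma psi_sum {ι : Type*} (s : Finset ι) (f : ι → ZMod p) :
    ψ p (∑ i ∈ s, f i) = ∏ i ∈ s, ψ p (f i) := by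
  classical
  induction s using Finset.cons_induction with
  | empty => simp
  | cons a s ha ih => rw [Finset.sum_cons, Finset.prod_cons, AddChar.map_add_eq_mul, ih]

lemma cast_ne_zero (hp : 11 ≤ p) {k : ℕ} (hk0 : k ≠ 0) (hk : k < 11) : (k : ZMod p) ≠ 0 := by
  rw [Ne, ZMod.natCast_eq_zero_iff]
  intro h
  have := Nat.le_of_dvd (Nat.pos_of_ne_zero hk0) h
  omega

lemma six_ne (hp : 11 ≤ p) : (6 : ZMod p) ≠ 0 := by
  have := cast_ne_zero (p := p) hp (k := 6) (by norm_num) (by norm_num)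
  simpa using this

lemma two_ne (hp : 11 ≤ p) : (2 : ZMod p) ≠ 0 := by
  have := cast_ne_zero (p := p) hp (k := 2) (by norm_num) (by norm_num)
  simpa using this

/-- the fiber of `g` over any point has at most 3 elements -/
lemma card_fiber_le (hp : 11 ≤ p) (x : ZMod p) :
    (univ.filter fun y : ZMod p => g y = g x).card ≤ 3 := by
  have h6 : (6 : ZMod p) ≠ 0 := six_ne hp
  have h2 : (2 : ZMod p) ≠ 0 := two_ne hp
  set q : (ZMod p)[X] := C 2 * X ^ 3 + C 3 * X ^ 2 + X - C (2 * x ^ 3 + 3 * x ^ 2 + x) with hq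
  have hq3 : q.coeff 3 = 2 := by
    simp [hq, coeff_sub, coeff_C, coeff_X, ← Polynomial.C_pow, ← map_mul, ← map_add]
  have hqne : q ≠ 0 := fun h => h2 (by rw [← hq3, h, coeff_zero])
  have hdeg : q.natDegree ≤ 3 := by
    rw [hq]
    compute_degree
  have hsub : (univ.filter fun y : ZMod p => g y = g x) ⊆ q.roots.toFinset := by
    intro y hy
    rw [mem_filter] at hy
    have hgy : g y = g x := hy.2
    rw [Multiset.mem_toFinset, mem_roots']
    refine ⟨hqne, ?_⟩
    have : (2 * y ^ 3 + 3 * y ^ 2 + y : ZMod p) = 2 * x ^ 3 + 3 * x ^ 2 + x := by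
      have h6' : (6 : ZMod p)⁻¹ ≠ 0 := inv_ne_zero h6
      exact mul_left_cancel₀ h6' hgy
    simp only [IsRoot, hq, eval_sub, eval_add, eval_mul, eval_pow, eval_C, eval_X]
    rw [this]
    ring
  calc (univ.filter fun y : ZMod p => g y = g x).card
      ≤ q.roots.toFinset.card := Finset.card_le_card hsub
    _ ≤ Multiset.card q.roots := Multiset.toFinset_card_le _
    _ ≤ q.natDegree := card_roots' q
    _ ≤ 3 := hdeg

lemma g_shift (hp : 11 ≤ p) (t y h : ZMod p) :
    t * g (y + h) - t * g y = (t * h) * y ^ 2 + (t * (h ^ 2 + h)) * y + t * g h := by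
  have h6 : (6 : ZMod p) ≠ 0 := six_ne hp
  simp only [g]
  field_simp
  ring

/-- quadratic Gauss sum modulus -/
lemma quad_sum_sq (hp : 11 ≤ p) {a : ZMod p} (b : ZMod p) (ha : a ≠ 0) :
    ‖∑ y : ZMod p, ψ p (a * y ^ 2 + b * y)‖ ^ 2 = p := by
  have h2 : (2 : ZMod p) ≠ 0 := two_ne hp
  set T := ∑ y : ZMod p, ψ p (a * y ^ 2 + b * y) with hT
  have key : T * (starRingEnd ℂ) T = (p : ℂ) := by
    rw [hT, map_sum]
    simp only [conj_psi]
    rw [Finset.sum_mul_sum]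
    have e1 : ∀ x y : ZMod p,
        ψ p (a * x ^ 2 + b * x) * ψ p (-(a * y ^ 2 + b * y))
          = ψ p ((a * x ^ 2 + b * x) - (a * y ^ 2 + b * y)) := fun x y => by
      rw [← AddChar.map_add_eq_mul, sub_eq_add_neg]
    simp only [e1]
    rw [Finset.sum_comm]
    have e2 : ∀ y : ZMod p,
        ∑ x : ZMod p, ψ p ((a * x ^ 2 + b * x) - (a * y ^ 2 + b * y))
          = ∑ h : ZMod p, ψ p ((a * h ^ 2 + b * h) + (2 * a * h) * y) := by
      intro y
      rw [← Fintype.sum_equiv (Equiv.addLeft y)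
        (fun h => ψ p ((a * (y + h) ^ 2 + b * (y + h)) - (a * y ^ 2 + b * y)))
        (fun x => ψ p ((a * x ^ 2 + b * x) - (a * y ^ 2 + b * y))) (fun h => rfl)]
      refine Finset.sum_congr rfl fun h _ => ?_
      congr 1
      ring
    simp only [e2]
    rw [Finset.sum_comm]
    have e3 : ∀ h : ZMod p,
        ∑ y : ZMod p, ψ p ((a * h ^ 2 + b * h) + (2 * a * h) * y)
          = ψ p (a * h ^ 2 + b * h) * (if (2 * a * h : ZMod p) = 0 then (p : ℂ) else 0) := by
      intro h
      rw [← sum_psi_mul (2 * a * h)]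
      rw [Finset.mul_sum]
      refine Finset.sum_congr rfl fun y _ => ?_
      rw [← AddChar.map_add_eq_mul]
      congr 1
      ring
    simp only [e3]
    rw [Finset.sum_eq_single (0 : ZMod p) (fun h _ hne => by
      have hne2 : (2 * a * h : ZMod p) ≠ 0 := mul_ne_zero (mul_ne_zero h2 ha) hne
      simp [hne2]) (fun h => absurd (mem_univ 0) h)]
    simp
  have keyR : ‖T‖ ^ 2 = (p : ℝ) := by
    have h1 : ((‖T‖ ^ 2 : ℝ) : ℂ) = (p : ℂ) := by
      rw [← key, Complex.mul_conj, Complex.normSq_eq_norm_sq]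
    exact_mod_cast h1
  exact keyR

lemma S_conj_eq (hp : 11 ≤ p) (t : ZMod p) :
    S p t * (starRingEnd ℂ) (S p t)
      = ∑ h : ZMod p, ψ p (t * g h) *
          ∑ y : ZMod p, ψ p ((t * h) * y ^ 2 + (t * (h ^ 2 + h)) * y) := by
  rw [S, map_sum]
  simp only [conj_psi]
  rw [Finset.sum_mul_sum]
  have e1 : ∀ x y : ZMod p, ψ p (t * g x) * ψ p (-(t * g y)) = ψ p (t * g x - t * g y) :=
    fun x y => by rw [← AddChar.map_add_eq_mul, sub_eq_add_neg]
  simp only [e1]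
  rw [Finset.sum_comm]
  have e2 : ∀ y : ZMod p,
      ∑ x : ZMod p, ψ p (t * g x - t * g y)
        = ∑ h : ZMod p, ψ p ((t * h) * y ^ 2 + (t * (h ^ 2 + h)) * y + t * g h) := by
    intro y
    rw [← Fintype.sum_equiv (Equiv.addLeft y)
      (fun h => ψ p (t * g (y + h) - t * g y))
      (fun x => ψ p (t * g x - t * g y)) (fun h => rfl)]
    exact Finset.sum_congr rfl fun h _ => by rw [g_shift hp]
  simp only [e2]
  rw [Finset.sum_comm]
  refine Finset.sum_congr rfl fun h _ => ?_
  rw [Finset.mul_sum]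
  refine Finset.sum_congr rfl fun y _ => ?_
  rw [← AddChar.map_add_eq_mul]
  congr 1
  ring

lemma S_zero : S p 0 = (p : ℂ) := by
  rw [S]
  simp [ZMod.card]

/-- Weyl differencing bound -/
lemma S_sq_le (hp : 11 ≤ p) {t : ZMod p} (ht : t ≠ 0) :
    ‖S p t‖ ^ 2 ≤ 2 * p * Real.sqrt p := by
  have hp0 : (0 : ℝ) < p := by positivity
  have h1p : (1 : ℝ) ≤ (p : ℝ) := by
    have : 1 ≤ p := by omega
    exact_mod_cast this
  have hq1 : (1 : ℝ) ≤ Real.sqrt p := by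
    rw [show (1 : ℝ) = Real.sqrt 1 by simp]
    exact Real.sqrt_le_sqrt h1p
  have key : ((‖S p t‖ ^ 2 : ℝ) : ℂ)
      = ∑ h : ZMod p, ψ p (t * g h) *
          ∑ y : ZMod p, ψ p ((t * h) * y ^ 2 + (t * (h ^ 2 + h)) * y) := by
    rw [← S_conj_eq hp, Complex.mul_conj, Complex.normSq_eq_norm_sq]
  have hnorm : ‖S p t‖ ^ 2
      ≤ ∑ h : ZMod p, ‖∑ y : ZMod p, ψ p ((t * h) * y ^ 2 + (t * (h ^ 2 + h)) * y)‖ := by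
    calc ‖S p t‖ ^ 2 = ‖((‖S p t‖ ^ 2 : ℝ) : ℂ)‖ := by
          rw [Complex.norm_real]
          exact (Real.norm_of_nonneg (by positivity)).symm
      _ = ‖∑ h : ZMod p, ψ p (t * g h) *
            ∑ y : ZMod p, ψ p ((t * h) * y ^ 2 + (t * (h ^ 2 + h)) * y)‖ := by rw [key]
      _ ≤ ∑ h : ZMod p, ‖ψ p (t * g h) *
            ∑ y : ZMod p, ψ p ((t * h) * y ^ 2 + (t * (h ^ 2 + h)) * y)‖ :=
          norm_sum_le _ _
      _ = ∑ h : ZMod p, ‖∑ y : ZMod p, ψ p ((t * h) * y ^ 2 + (t * (h ^ 2 + h)) * y)‖ := by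
          refine Finset.sum_congr rfl fun h _ => ?_
          rw [norm_mul, norm_psi, one_mul]
  have hterm : ∀ h : ZMod p, h ≠ 0 →
      ‖∑ y : ZMod p, ψ p ((t * h) * y ^ 2 + (t * (h ^ 2 + h)) * y)‖ = Real.sqrt p := by
    intro h hh
    have hth : (t * h : ZMod p) ≠ 0 := mul_ne_zero ht hh
    have := quad_sum_sq hp (a := t * h) (t * (h ^ 2 + h)) hth
    have hnn : (0 : ℝ) ≤ ‖∑ y : ZMod p, ψ p ((t * h) * y ^ 2 + (t * (h ^ 2 + h)) * y)‖ :=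
      norm_nonneg _
    nlinarith [Real.sq_sqrt hp0.le, Real.sqrt_nonneg (p : ℝ),
      sq_nonneg (‖∑ y : ZMod p, ψ p ((t * h) * y ^ 2 + (t * (h ^ 2 + h)) * y)‖ - Real.sqrt p)]
  have hzero : ‖∑ y : ZMod p, ψ p ((t * 0) * y ^ 2 + (t * ((0:ZMod p) ^ 2 + 0)) * y)‖ = p := by
    simp [ZMod.card]
  calc ‖S p t‖ ^ 2
      ≤ ∑ h : ZMod p, ‖∑ y : ZMod p, ψ p ((t * h) * y ^ 2 + (t * (h ^ 2 + h)) * y)‖ := hnorm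
    _ = ‖∑ y : ZMod p, ψ p ((t * 0) * y ^ 2 + (t * ((0:ZMod p) ^ 2 + 0)) * y)‖
        + ∑ h ∈ univ.erase (0 : ZMod p),
            ‖∑ y : ZMod p, ψ p ((t * h) * y ^ 2 + (t * (h ^ 2 + h)) * y)‖ :=
        (Finset.add_sum_erase _ _ (mem_univ 0)).symm
    _ = (p : ℝ) + ∑ h ∈ univ.erase (0 : ZMod p),
            ‖∑ y : ZMod p, ψ p ((t * h) * y ^ 2 + (t * (h ^ 2 + h)) * y)‖ := by rw [hzero]
    _ = (p : ℝ) + ∑ h ∈ univ.erase (0 : ZMod p), Real.sqrt p := by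
        congr 1
        exact Finset.sum_congr rfl fun h hh => hterm h (Finset.ne_of_mem_erase hh)
    _ = (p : ℝ) + ((p : ℝ) - 1) * Real.sqrt p := by
        rw [Finset.sum_const, Finset.card_erase_of_mem (mem_univ 0), card_univ, ZMod.card]
        have hp1 : 1 ≤ p := by omega
        rw [nsmul_eq_mul]
        congr 1
        push_cast [Nat.cast_sub hp1]
        ring
    _ ≤ (p : ℝ) * Real.sqrt p + (p : ℝ) * Real.sqrt p := by
        have h1 : (p : ℝ) ≤ (p : ℝ) * Real.sqrt p := by
          nlinarith
        have h2 : ((p : ℝ) - 1) * Real.sqrt p ≤ (p : ℝ) * Real.sqrt p := by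
          nlinarith
        linarith
    _ = 2 * p * Real.sqrt p := by ring

lemma second_moment (hp : 11 ≤ p) : ∑ t : ZMod p, ‖S p t‖ ^ 2 ≤ 3 * (p : ℝ) ^ 2 := by
  have key : ((∑ t : ZMod p, ‖S p t‖ ^ 2 : ℝ) : ℂ)
      = ∑ x : ZMod p, ((univ.filter fun y : ZMod p => g y = g x).card : ℂ) * p := by
    have e0 : ((∑ t : ZMod p, ‖S p t‖ ^ 2 : ℝ) : ℂ)
        = ∑ t : ZMod p, S p t * (starRingEnd ℂ) (S p t) := by
      push_cast
      refine Finset.sum_congr rfl fun t _ => ?_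
      rw [Complex.mul_conj, Complex.normSq_eq_norm_sq]
      push_cast
      try ring
    rw [e0]
    have e1 : ∀ t : ZMod p, S p t * (starRingEnd ℂ) (S p t)
        = ∑ x : ZMod p, ∑ y : ZMod p, ψ p (t * (g x - g y)) := by
      intro t
      rw [S, map_sum, Finset.sum_mul_sum]
      refine Finset.sum_congr rfl fun x _ => Finset.sum_congr rfl fun y _ => ?_
      rw [conj_psi, ← AddChar.map_add_eq_mul]
      congr 1
      ring
    simp only [e1]
    rw [Finset.sum_comm]
    refine Finset.sum_congr rfl fun x _ => ?_
    rw [Finset.sum_comm]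
    have e2 : ∀ y : ZMod p, ∑ t : ZMod p, ψ p (t * (g x - g y))
        = if g x - g y = 0 then (p : ℂ) else 0 := fun y => sum_psi_mul _
    simp only [e2]
    have e3 : ∀ y : ZMod p, (g x - g y = 0) = (g y = g x) := by
      intro y
      simp [sub_eq_zero, eq_comm]
    simp only [e3]
    rw [← Finset.sum_filter, Finset.sum_const, nsmul_eq_mul]
  have keyR : ∑ t : ZMod p, ‖S p t‖ ^ 2
      = ∑ x : ZMod p, ((univ.filter fun y : ZMod p => g y = g x).card : ℝ) * p := by
    have : ((∑ t : ZMod p, ‖S p t‖ ^ 2 : ℝ) : ℂ)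
        = ((∑ x : ZMod p, ((univ.filter fun y : ZMod p => g y = g x).card : ℝ) * p : ℝ) : ℂ) := by
      rw [key]
      push_cast
      try rfl
    exact_mod_cast this
  rw [keyR]
  calc ∑ x : ZMod p, ((univ.filter fun y : ZMod p => g y = g x).card : ℝ) * p
      ≤ ∑ _x : ZMod p, 3 * (p : ℝ) := by
        refine Finset.sum_le_sum fun x _ => ?_
        have := card_fiber_le hp x
        have hcard : ((univ.filter fun y : ZMod p => g y = g x).card : ℝ) ≤ 3 := by
          exact_mod_cast this
        have hp0 : (0 : ℝ) ≤ p := by positivity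
        nlinarith
    _ = 3 * (p : ℝ) ^ 2 := by
        rw [Finset.sum_const, card_univ, ZMod.card, nsmul_eq_mul]
        ring

lemma count_formula (m : ZMod p) :
    ((univ.filter fun n : Fin 9 → ZMod p => ∑ i, g (n i) = m).card : ℂ) * p
      = ∑ t : ZMod p, ψ p (-(t * m)) * S p t ^ 9 := by
  have expand : ∀ t : ZMod p, S p t ^ 9
      = ∑ n : Fin 9 → ZMod p, ∏ i, ψ p (t * g (n i)) := by
    intro t
    rw [S]
    exact Fintype.sum_pow _ 9
  symm
  calc ∑ t : ZMod p, ψ p (-(t * m)) * S p t ^ 9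
      = ∑ t : ZMod p, ∑ n : Fin 9 → ZMod p, ψ p (t * ((∑ i, g (n i)) - m)) := by
        refine Finset.sum_congr rfl fun t _ => ?_
        rw [expand, Finset.mul_sum]
        refine Finset.sum_congr rfl fun n _ => ?_
        rw [← psi_sum, ← AddChar.map_add_eq_mul]
        congr 1
        rw [mul_sub, Finset.mul_sum, sub_eq_neg_add]
    _ = ∑ n : Fin 9 → ZMod p, ∑ t : ZMod p, ψ p (t * ((∑ i, g (n i)) - m)) :=
        Finset.sum_comm
    _ = ∑ n : Fin 9 → ZMod p, if (∑ i, g (n i)) - m = 0 then (p : ℂ) else 0 := by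
        exact Finset.sum_congr rfl fun n _ => sum_psi_mul _
    _ = ∑ n : Fin 9 → ZMod p, if (∑ i, g (n i)) = m then (p : ℂ) else 0 := by
        refine Finset.sum_congr rfl fun n _ => ?_
        simp [sub_eq_zero]
    _ = ((univ.filter fun n : Fin 9 → ZMod p => ∑ i, g (n i) = m).card : ℂ) * p := by
        rw [← Finset.sum_filter, Finset.sum_const, nsmul_eq_mul]

end LocalCountAux

open LocalCountAux Finset in
theorem local_count_lower_bound (p : ℕ) [Fact p.Prime] (hp : 11 ≤ p) (m : ZMod p) :
    ((p : ℝ) ^ 8) * (1 - 2 / Real.sqrt p - 3 / p) ≤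
      ((Finset.univ.filter fun n : Fin 9 → ZMod p =>
        ∑ i, (6 : ZMod p)⁻¹ * (2 * (n i) ^ 3 + 3 * (n i) ^ 2 + n i) = m).card : ℝ) := by
  classical
  have hp0 : (0 : ℝ) < p := by positivity
  set q : ℝ := Real.sqrt p with hqdef
  set r : ℝ := Real.sqrt q with hrdef
  have hq0 : (0 : ℝ) < q := Real.sqrt_pos.mpr hp0
  have hr0 : (0 : ℝ) < r := Real.sqrt_pos.mpr hq0
  have hq2 : q ^ 2 = p := Real.sq_sqrt hp0.le
  have hr2 : r ^ 2 = q := Real.sq_sqrt hq0.le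
  set N := (Finset.univ.filter fun n : Fin 9 → ZMod p =>
      ∑ i, (6 : ZMod p)⁻¹ * (2 * (n i) ^ 3 + 3 * (n i) ^ 2 + n i) = m).card with hN
  have hNg : N = (univ.filter fun n : Fin 9 → ZMod p => ∑ i, g (n i) = m).card := rfl
  -- the Fourier error term
  have hformula : ((N : ℂ)) * p - (p : ℂ) ^ 9
      = ∑ t ∈ univ.erase (0 : ZMod p), ψ p (-(t * m)) * S p t ^ 9 := by
    rw [hNg, count_formula m, ← Finset.add_sum_erase _ _ (mem_univ (0 : ZMod p))]
    simp [S_zero]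
  -- bound on the error
  set B : ℝ := 2 * (p : ℝ) * q with hBdef
  have hB0 : (0 : ℝ) ≤ B := by positivity
  have hsqB : Real.sqrt B = Real.sqrt 2 * q * r := by
    rw [hBdef, Real.sqrt_mul (by positivity), Real.sqrt_mul (by norm_num)]
  have herr : ‖((N : ℂ)) * p - (p : ℂ) ^ 9‖ ≤ 2 * (p : ℝ) ^ 8 * q := by
    rw [hformula]
    have step1 : ‖∑ t ∈ univ.erase (0 : ZMod p), ψ p (-(t * m)) * S p t ^ 9‖
        ≤ ∑ t ∈ univ.erase (0 : ZMod p), ‖S p t‖ ^ 9 := by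
      calc ‖∑ t ∈ univ.erase (0 : ZMod p), ψ p (-(t * m)) * S p t ^ 9‖
          ≤ ∑ t ∈ univ.erase (0 : ZMod p), ‖ψ p (-(t * m)) * S p t ^ 9‖ := norm_sum_le _ _
        _ = ∑ t ∈ univ.erase (0 : ZMod p), ‖S p t‖ ^ 9 := by
            refine Finset.sum_congr rfl fun t _ => ?_
            rw [norm_mul, norm_psi, one_mul, norm_pow]
    have step2 : ∀ t ∈ univ.erase (0 : ZMod p),
        ‖S p t‖ ^ 9 ≤ (Real.sqrt B) ^ 7 * ‖S p t‖ ^ 2 := by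
      intro t ht
      have htne : t ≠ 0 := Finset.ne_of_mem_erase ht
      have hsq : ‖S p t‖ ^ 2 ≤ B := S_sq_le hp htne
      have hle : ‖S p t‖ ≤ Real.sqrt B := by
        have := Real.sqrt_le_sqrt hsq
        rwa [Real.sqrt_sq (norm_nonneg _)] at this
      have h7 : ‖S p t‖ ^ 7 ≤ (Real.sqrt B) ^ 7 :=
        pow_le_pow_left₀ (norm_nonneg _) hle 7
      calc ‖S p t‖ ^ 9 = ‖S p t‖ ^ 7 * ‖S p t‖ ^ 2 := by ring
        _ ≤ (Real.sqrt B) ^ 7 * ‖S p t‖ ^ 2 :=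
            mul_le_mul_of_nonneg_right h7 (by positivity)
    have step3 : ∑ t ∈ univ.erase (0 : ZMod p), ‖S p t‖ ^ 2 ≤ 2 * (p : ℝ) ^ 2 := by
      have := second_moment (p := p) hp
      have hS0 : ‖S p (0 : ZMod p)‖ ^ 2 = (p : ℝ) ^ 2 := by
        rw [S_zero]
        simp [Complex.norm_natCast]
      rw [Finset.sum_erase_eq_sub (mem_univ (0 : ZMod p)), hS0]
      linarith
    have step4 : ∑ t ∈ univ.erase (0 : ZMod p), ‖S p t‖ ^ 9
        ≤ (Real.sqrt B) ^ 7 * (2 * (p : ℝ) ^ 2) := by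
      calc ∑ t ∈ univ.erase (0 : ZMod p), ‖S p t‖ ^ 9
          ≤ ∑ t ∈ univ.erase (0 : ZMod p), (Real.sqrt B) ^ 7 * ‖S p t‖ ^ 2 :=
            Finset.sum_le_sum step2
        _ = (Real.sqrt B) ^ 7 * ∑ t ∈ univ.erase (0 : ZMod p), ‖S p t‖ ^ 2 := by
            rw [Finset.mul_sum]
        _ ≤ (Real.sqrt B) ^ 7 * (2 * (p : ℝ) ^ 2) :=
            mul_le_mul_of_nonneg_left step3 (by positivity)
    -- numeric: (√B)^7 * 2p² ≤ 2 p^8 q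
    have hnum : (Real.sqrt B) ^ 7 * (2 * (p : ℝ) ^ 2) ≤ 2 * (p : ℝ) ^ 8 * q := by
      have hs2 : (Real.sqrt 2) ^ 2 = 2 := Real.sq_sqrt (by norm_num)
      have hs2pos : (0 : ℝ) < Real.sqrt 2 := Real.sqrt_pos.mpr (by norm_num)
      have h85 : 8 * Real.sqrt 2 ≤ r ^ 5 := by
        have h4 : (8 * Real.sqrt 2) ^ 4 = 16384 := by
          rw [mul_pow]
          have : (Real.sqrt 2) ^ 4 = 4 := by
            calc (Real.sqrt 2) ^ 4 = ((Real.sqrt 2) ^ 2) ^ 2 := by ring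
              _ = 4 := by rw [hs2]; norm_num
          rw [this]; norm_num
        have h5 : (r ^ 5) ^ 4 = (p : ℝ) ^ 5 := by
          calc (r ^ 5) ^ 4 = ((r ^ 2) ^ 2) ^ 5 := by ring
            _ = (q ^ 2) ^ 5 := by rw [hr2]
            _ = (p : ℝ) ^ 5 := by rw [hq2]
        have h6 : (16384 : ℝ) ≤ (p : ℝ) ^ 5 := by
          calc (16384 : ℝ) ≤ 11 ^ 5 := by norm_num
            _ ≤ (p : ℝ) ^ 5 := by
              apply pow_le_pow_left₀ (by norm_num)
              exact_mod_cast hp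
        apply le_of_pow_le_pow_left₀ (n := 4) (by norm_num) (by positivity)
        rw [h4, h5]
        exact h6
      calc (Real.sqrt B) ^ 7 * (2 * (p : ℝ) ^ 2)
          = (Real.sqrt 2) ^ 7 * q ^ 7 * r ^ 7 * (2 * (p : ℝ) ^ 2) := by
            rw [hsqB]; ring
        _ = (8 * Real.sqrt 2) * (q ^ 7 * r ^ 7 * (2 * (p : ℝ) ^ 2)) := by
            have : (Real.sqrt 2) ^ 7 = 8 * Real.sqrt 2 := by
              calc (Real.sqrt 2) ^ 7 = ((Real.sqrt 2) ^ 2) ^ 3 * Real.sqrt 2 := by ring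
                _ = 8 * Real.sqrt 2 := by rw [hs2]; norm_num
            rw [this]; ring
        _ ≤ r ^ 5 * (q ^ 7 * r ^ 7 * (2 * (p : ℝ) ^ 2)) := by
            apply mul_le_mul_of_nonneg_right h85
            positivity
        _ = ((r ^ 2) ^ 6) * (q ^ 7 * (2 * (p : ℝ) ^ 2)) := by ring
        _ = q ^ 6 * (q ^ 7 * (2 * (p : ℝ) ^ 2)) := by rw [hr2]
        _ = ((q ^ 2) ^ 6) * (2 * (p : ℝ) ^ 2) * q := by ring
        _ = (p : ℝ) ^ 6 * (2 * (p : ℝ) ^ 2) * q := by rw [hq2]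
        _ = 2 * (p : ℝ) ^ 8 * q := by ring
    linarith [step1, step4, hnum]
  -- transfer to the reals
  have herrR : |(N : ℝ) * p - (p : ℝ) ^ 9| ≤ 2 * (p : ℝ) ^ 8 * q := by
    have hcast : (((N : ℝ) * p - (p : ℝ) ^ 9 : ℝ) : ℂ) = ((N : ℂ)) * p - (p : ℂ) ^ 9 := by
      push_cast
      ring
    have h := herr
    rw [← hcast] at h
    rwa [Complex.norm_real, Real.norm_eq_abs] at h
  have hlow : (p : ℝ) ^ 9 - 2 * (p : ℝ) ^ 8 * q ≤ (N : ℝ) * p := by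
    have := abs_le.mp herrR
    linarith [this.1]
  -- conclude
  have hfinal : ((p : ℝ) ^ 8) * (1 - 2 / q - 3 / p) * p ≤ (N : ℝ) * p := by
    have hpq : (p : ℝ) / q = q := by
      rw [div_eq_iff hq0.ne']
      nlinarith [hq2]
    have e1 : ((p : ℝ) ^ 8) * (1 - 2 / q - 3 / p) * p
        = (p : ℝ) ^ 9 - 2 * (p : ℝ) ^ 8 * ((p : ℝ) / q) - 3 * (p : ℝ) ^ 8 * ((p : ℝ) / p) := by
      ring
    rw [e1, hpq, div_self hp0.ne']
    have h3 : (0 : ℝ) ≤ 3 * (p : ℝ) ^ 8 := by positivity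
    linarith
  exact le_of_mul_le_mul_right hfinal hp0
end
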